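/- For any solution of the PI-controlled system, the function W(ω(t), χ(t)) = ½ M ω(t)² + ½ β(χ(t) − χ̄)² is nonincreasing in t, and consequently every solution is bounded. -/

import Mathlib

/-!
Since `β χ̄ = ū - 1ᵀδ_L`, the equations are the damped oscillator
`M ω̇ = -(D + γ) ω - β (χ - χ̄)`, `χ̇ = ω`; its energy `W = ½ M ω² + ½ β (χ - χ̄)²` has derivative
`-(D + γ) ω² ≤ 0`, so it is nonincreasing.
As `W` is a positive definite quadratic form in `(ω, χ - χ̄)`, the bound `W(t) ≤ W(0)` confines
the trajectory to a bounded ellipse.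
-/

noncomputable def oscillatorEnergy (M β xbar w x : ℝ) : ℝ :=
  (1 / 2) * M * w ^ 2 + (1 / 2) * β * (x - xbar) ^ 2

section DampedOscillator

variable {M β c χbar : ℝ} {ω χ : ℝ → ℝ}

theorem hasDerivAt_oscillatorEnergy (hM : M ≠ 0) {t : ℝ}
    (hω : HasDerivAt ω ((-c * ω t - β * (χ t - χbar)) / M) t) (hχ : HasDerivAt χ (ω t) t) :
    HasDerivAt (fun t ↦ oscillatorEnergy M β χbar (ω t) (χ t)) (-c * ω t ^ 2) t := by
  have hW : HasDerivAt (fun t ↦ oscillatorEnergy M β χbar (ω t) (χ t)) _ t :=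
    ((hω.pow 2).const_mul ((1 / 2) * M)).add (((hχ.sub_const χbar).pow 2).const_mul ((1 / 2) * β))
  refine hW.congr_deriv ?_
  field_simp
  ring

theorem antitoneOn_oscillatorEnergy (hM : M ≠ 0) (hc : 0 ≤ c) {s : Set ℝ} (hs : Convex ℝ s)
    (hω : ∀ t ∈ s, HasDerivAt ω ((-c * ω t - β * (χ t - χbar)) / M) t)
    (hχ : ∀ t ∈ s, HasDerivAt χ (ω t) t) :
    AntitoneOn (fun t ↦ oscillatorEnergy M β χbar (ω t) (χ t)) s := by
  have hW : ∀ t ∈ s, HasDerivAt (fun t ↦ oscillatorEnergy M β χbar (ω t) (χ t))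
      (-c * ω t ^ 2) t := fun t ht ↦ hasDerivAt_oscillatorEnergy hM (hω t ht) (hχ t ht)
  refine antitoneOn_of_hasDerivWithinAt_nonpos hs
    (fun t ht ↦ (hW t ht).continuousAt.continuousWithinAt)
    (fun t ht ↦ (hW t (interior_subset ht)).hasDerivWithinAt) fun t _ ↦ ?_
  have := mul_nonneg hc (sq_nonneg (ω t))
  linarith

theorem norm_le_of_oscillatorEnergy_le (hM : 0 < M) (hβ : 0 < β) {w x E : ℝ}
    (hE : oscillatorEnergy M β χbar w x ≤ E) :
    ‖(w, x)‖ ≤ √(2 * E / M) + (√(2 * E / β) + |χbar|) := by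
  have hw2 := mul_nonneg hM.le (sq_nonneg w)
  have hx2 := mul_nonneg hβ.le (sq_nonneg (x - χbar))
  unfold oscillatorEnergy at hE
  have hw : |w| ≤ √(2 * E / M) := Real.abs_le_sqrt <| by rw [le_div_iff₀ hM]; linarith
  have hx : |x - χbar| ≤ √(2 * E / β) := Real.abs_le_sqrt <| by rw [le_div_iff₀ hβ]; linarith
  have hx' : |x| - |χbar| ≤ |x - χbar| := abs_sub_abs_le_abs_sub x χbar
  have := Real.sqrt_nonneg (2 * E / M)
  have := Real.sqrt_nonneg (2 * E / β)
  rw [Prod.norm_def, Real.norm_eq_abs, Real.norm_eq_abs]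
  exact max_le (by linarith [abs_nonneg χbar]) (by linarith [abs_nonneg w])

end DampedOscillator

/-- W(ω(t), χ(t)) is nonincreasing along solutions, hence every solution is bounded. -/
theorem stmt18 (M D β γ : ℝ) (hM : 0 < M) (hD : 0 < D) (hβ : 0 < β) (hγ : 0 < γ)
    (nL : ℕ) (ubar : ℝ) (δL : Fin nL → ℝ)
    (χbar : ℝ) (hχbar : χbar = (ubar - ∑ i, δL i) / β)
    (ω χ : ℝ → ℝ)
    (hω : ∀ t ≥ (0 : ℝ), HasDerivAt ω ((-(D + γ) * ω t - β * χ t + (ubar - ∑ i, δL i)) / M) t)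
    (hχ : ∀ t ≥ (0 : ℝ), HasDerivAt χ (ω t) t) :
    (∀ s t : ℝ, 0 ≤ s → s ≤ t →
      (1 / 2) * M * (ω t) ^ 2 + (1 / 2) * β * (χ t - χbar) ^ 2 ≤
      (1 / 2) * M * (ω s) ^ 2 + (1 / 2) * β * (χ s - χbar) ^ 2) ∧
    (∃ R : ℝ, ∀ t ≥ (0 : ℝ), ‖(ω t, χ t)‖ ≤ R) := by
  have hforce : ubar - ∑ i, δL i = β * χbar := by
    rw [hχbar]; field_simp
  have hω' : ∀ t ∈ Set.Ici (0 : ℝ),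
      HasDerivAt ω ((-(D + γ) * ω t - β * (χ t - χbar)) / M) t := fun t ht ↦ by
    convert hω t ht using 2
    rw [hforce]; ring
  have hW := antitoneOn_oscillatorEnergy hM.ne' (by linarith) (convex_Ici 0) hω' hχ
  exact ⟨fun s t hs hst ↦ hW hs (hs.trans hst) hst,
    _, fun t ht ↦ norm_le_of_oscillatorEnergy_le hM hβ (hW Set.self_mem_Ici ht ht)⟩
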